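/- For graphs G on n vertices with no k+1 pairwise vertex-disjoint copies of K_2 (i.e., matching number at most k) with n ≥ n_0(k), the number of edges is at most k(n-k) + binom(k,2), with equality iff G = K_k + (n-k) isolated vertices with all edges of the K_k and join edges, i.e., G = K_k joined to an empty graph on n-k vertices (Erdős–Gallai). -/

import Mathlib

open SimpleGraph Finset Function

noncomputable local instance {V : Type*} (G : SimpleGraph V) : DecidableRel G.Adj :=
  fun _ _ => Classical.dec _

/-- `G` contains a copy of the 5-cycle as a subgraph. -/
def HasC5Copy {V : Type*} (G : SimpleGraph V) : Prop :=
  ∃ f : Fin 5 → V, Injective f ∧ ∀ i, G.Adj (f i) (f (i + 1))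

/-- `G` contains two vertex-disjoint copies of the 5-cycle. -/
def HasTwoDisjointC5 {V : Type*} (G : SimpleGraph V) : Prop :=
  ∃ f g : Fin 5 → V, Injective f ∧ Injective g ∧
    (∀ i, G.Adj (f i) (f (i + 1))) ∧ (∀ i, G.Adj (g i) (g (i + 1))) ∧
    ∀ i j, f i ≠ g j

/-- The join of two graphs. -/
def GraphJoin {V W : Type*} (G : SimpleGraph V) (H : SimpleGraph W) : SimpleGraph (V ⊕ W) where
  Adj x y :=
    match x, y with
    | Sum.inl a, Sum.inl b => G.Adj a b
    | Sum.inr a, Sum.inr b => H.Adj a b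
    | Sum.inl _, Sum.inr _ => True
    | Sum.inr _, Sum.inl _ => True
  symm := ⟨by rintro (a|a) (b|b) h <;> simp_all <;> exact h.symm⟩
  loopless := ⟨by rintro (a|a) h; exacts [G.irrefl h, H.irrefl h]⟩

/-- `G` contains `k` pairwise vertex-disjoint copies of `K_r`. -/
def HasDisjointCliques {V : Type*} (G : SimpleGraph V) (k r : ℕ) : Prop :=
  ∃ f : Fin k → Finset V, (∀ i, G.IsNClique r (f i)) ∧
    ∀ i j, i ≠ j → Disjoint (f i) (f j)

/-- Six pairwise vertex-disjoint copies of `P₄` inside the neighborhood of `v`. -/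
def SixDisjointP4InNbhd {V : Type*} (G : SimpleGraph V) (v : V) : Prop :=
  ∃ f : Fin 6 → Fin 4 → V,
    Injective (fun p : Fin 6 × Fin 4 => f p.1 p.2) ∧
    (∀ i j, G.Adj v (f i j)) ∧
    (∀ i, G.Adj (f i 0) (f i 1) ∧ G.Adj (f i 1) (f i 2) ∧ G.Adj (f i 2) (f i 3))

/-- `u` is joined to (at least) `t` pairwise disjoint `r`-cliques inside `S`. -/
def JoinedToDisjointCliques {V : Type*} (G : SimpleGraph V) (u : V) (S : Set V) (t r : ℕ) : Prop :=
  ∃ f : Fin t → Finset V, (∀ j, ↑(f j) ⊆ S ∧ G.IsNClique r (f j) ∧ ∀ w ∈ f j, G.Adj u w) ∧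
    ∀ i j, i ≠ j → Disjoint (f i) (f j)



lemma pairClique {V : Type*} [DecidableEq V] {G : SimpleGraph V} {v w : V} (h : G.Adj v w) :
    G.IsNClique 2 {v, w} := by
  rw [SimpleGraph.isNClique_iff]
  refine ⟨?_, Finset.card_pair h.ne⟩
  intro a ha b hb hne
  simp only [coe_insert, Set.mem_insert_iff, coe_singleton, Set.mem_singleton_iff] at ha hb
  rcases ha with rfl | rfl <;> rcases hb with rfl | rfl
  · exact absurd rfl hne
  · exact h
  · exact h.symm
  · exact absurd rfl hne

lemma greedy {V : Type*} [Fintype V] [DecidableEq V] (G : SimpleGraph V) :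
    ∀ (T F : Finset V), Disjoint T F →
      (∀ v ∈ T, 2 * T.card + F.card ≤ G.degree v) →
      ∃ f : Fin T.card → Finset V,
        (∀ i, G.IsNClique 2 (f i) ∧ Disjoint (f i) F) ∧
        ∀ i j, i ≠ j → Disjoint (f i) (f j) := by
  intro T
  induction T using Finset.induction_on with
  | empty =>
    intro F _ _
    refine ⟨fun i => ∅, fun i => ?_, fun i j _ => ?_⟩ <;>
      exact absurd i.isLt (by simp)
  | @insert v T' hv ih =>
    intro F hdisj hdeg
    have hvT : v ∈ insert v T' := mem_insert_self _ _
    have hdegv := hdeg v hvT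
    have hcard : (insert v T').card = T'.card + 1 := card_insert_of_notMem hv
    have hnsub : ¬ (G.neighborFinset v ⊆ insert v (T' ∪ F)) := by
      intro hsub
      have h1 := Finset.card_le_card hsub
      have h2 : (insert v (T' ∪ F)).card ≤ T'.card + F.card + 1 :=
        (card_insert_le _ _).trans (by have := card_union_le T' F; omega)
      rw [card_neighborFinset_eq_degree] at h1
      omega
    obtain ⟨w, hwN, hw⟩ := Finset.not_subset.mp hnsub
    have hadj : G.Adj v w := by rwa [mem_neighborFinset] at hwN
    simp only [mem_insert, mem_union, not_or] at hw
    obtain ⟨hwv, hwT', hwF⟩ := hw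
    have hvF : v ∉ F := disjoint_left.mp hdisj hvT
    set F' := insert v (insert w F) with hF'
    have hd' : Disjoint T' F' := by
      rw [Finset.disjoint_left]
      intro u hu
      simp only [hF', mem_insert, not_or]
      exact ⟨fun h => hv (h ▸ hu), fun h => hwT' (h ▸ hu),
        disjoint_left.mp hdisj (mem_insert_of_mem hu)⟩
    have hF'card : F'.card ≤ F.card + 2 :=
      (card_insert_le _ _).trans (by have := card_insert_le w F; omega)
    have hdeg' : ∀ u ∈ T', 2 * T'.card + F'.card ≤ G.degree u := by
      intro u hu
      have := hdeg u (mem_insert_of_mem hu)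
      omega
    obtain ⟨f', hf'1, hf'2⟩ := ih F' hd' hdeg'
    rw [hcard]
    have hvwF' : ({v, w} : Finset V) ⊆ F' := by
      intro x hx
      simp only [mem_insert, mem_singleton] at hx
      rcases hx with rfl | rfl
      · exact mem_insert_self _ _
      · exact mem_insert_of_mem (mem_insert_self _ _)
    refine ⟨Fin.cons {v, w} f', ?_, ?_⟩
    · intro i
      induction i using Fin.cases with
      | zero =>
        simp only [Fin.cons_zero]
        refine ⟨pairClique hadj, ?_⟩
        rw [Finset.disjoint_left]
        intro x hx
        simp only [mem_insert, mem_singleton] at hx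
        rcases hx with rfl | rfl <;> assumption
      | succ j =>
        simp only [Fin.cons_succ]
        refine ⟨(hf'1 j).1, ?_⟩
        exact Finset.disjoint_of_subset_right (by intro x hx; exact mem_insert_of_mem (mem_insert_of_mem hx)) ((hf'1 j).2)
    · intro i j hne
      induction i using Fin.cases with
      | zero =>
        induction j using Fin.cases with
        | zero => exact absurd rfl hne
        | succ j' =>
          simp only [Fin.cons_zero, Fin.cons_succ]
          exact (Finset.disjoint_of_subset_right hvwF' ((hf'1 j').2)).symm
      | succ i' =>
        induction j using Fin.cases with
        | zero =>
          simp only [Fin.cons_zero, Fin.cons_succ]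
          exact Finset.disjoint_of_subset_right hvwF' ((hf'1 i').2)
        | succ j' =>
          simp only [Fin.cons_succ]
          exact hf'2 i' j' (fun h => hne (h ▸ rfl))


def MatchingIn {V : Type*} (G : SimpleGraph V) (m : ℕ) (A : Finset V) : Prop :=
  ∃ f : Fin m → Finset V, (∀ i, G.IsNClique 2 (f i) ∧ f i ⊆ A) ∧
    ∀ i j, i ≠ j → Disjoint (f i) (f j)

-- combine: matching of size m inside Sᶜ plus greedy on S gives matching of size S.card + m
lemma combine {V : Type*} [Fintype V] [DecidableEq V] (G : SimpleGraph V) (S : Finset V) (m : ℕ)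
    (hM : MatchingIn G m Sᶜ)
    (hdeg : ∀ v ∈ S, 2 * S.card + 2 * m ≤ G.degree v)
    (hgreedy : ∀ (T F : Finset V), Disjoint T F →
      (∀ v ∈ T, 2 * T.card + F.card ≤ G.degree v) →
      ∃ f : Fin T.card → Finset V,
        (∀ i, G.IsNClique 2 (f i) ∧ Disjoint (f i) F) ∧
        ∀ i j, i ≠ j → Disjoint (f i) (f j)) :
    ∃ f : Fin (S.card + m) → Finset V, (∀ i, G.IsNClique 2 (f i)) ∧
      ∀ i j, i ≠ j → Disjoint (f i) (f j) := by
  obtain ⟨g, hg1, hg2⟩ := hM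
  set F : Finset V := (Finset.univ : Finset (Fin m)).biUnion g with hF
  have hgF : ∀ j, g j ⊆ F := fun j x hx => mem_biUnion.mpr ⟨j, mem_univ _, hx⟩
  have hFcard : F.card ≤ 2 * m := by
    calc F.card ≤ ∑ j : Fin m, (g j).card := card_biUnion_le
    _ = ∑ j : Fin m, 2 := by
        apply Finset.sum_congr rfl
        intro j _
        exact (hg1 j).1.2
    _ = 2 * m := by simp [mul_comm]
  have hSF : Disjoint S F := by
    rw [disjoint_right]
    intro x hx
    obtain ⟨j, _, hj⟩ := mem_biUnion.mp hx
    have := (hg1 j).2 hj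
    simpa using this
  obtain ⟨f2, hf21, hf22⟩ := hgreedy S F hSF (fun v hv => le_trans (by omega) (hdeg v hv))
  refine ⟨Fin.append f2 g, ?_, ?_⟩
  · intro i
    induction i using Fin.addCases with
    | left i => rw [Fin.append_left]; exact (hf21 i).1
    | right i => rw [Fin.append_right]; exact (hg1 i).1
  · intro i j hne
    induction i using Fin.addCases with
    | left i =>
      induction j using Fin.addCases with
      | left j =>
        rw [Fin.append_left, Fin.append_left]
        exact hf22 i j (fun h => hne (by rw [h]))
      | right j =>
        rw [Fin.append_left, Fin.append_right]
        exact Finset.disjoint_of_subset_right (hgF j) (hf21 i).2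
    | right i =>
      induction j using Fin.addCases with
      | left j =>
        rw [Fin.append_right, Fin.append_left]
        exact (Finset.disjoint_of_subset_right (hgF i) (hf21 j).2).symm
      | right j =>
        rw [Fin.append_right, Fin.append_right]
        exact hg2 i j (fun h => hne (by rw [h]))

noncomputable def edgesIn {V : Type*} [Fintype V] (G : SimpleGraph V) (A : Finset V) : Finset (Sym2 V) :=
  @Finset.filter _ (fun e => ∀ v ∈ e, v ∈ A) (Classical.decPred _) G.edgeFinset

lemma edgesIn_card {V : Type*} [Fintype V] [DecidableEq V] (G : SimpleGraph V) (D : ℕ) :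
    ∀ (t : ℕ) (A : Finset V), (∀ v ∈ A, G.degree v ≤ D) →
      ¬ MatchingIn G (t + 1) A → (edgesIn G A).card ≤ t * (2 * D) := by
  intro t
  induction t with
  | zero =>
    intro A _ hno
    simp only [zero_mul, Nat.le_zero, Finset.card_eq_zero]
    by_contra hne
    obtain ⟨e, he⟩ := Finset.nonempty_of_ne_empty hne
    simp only [edgesIn, mem_filter, mem_edgeFinset] at he
    obtain ⟨hee, hsub⟩ := he
    induction e with
    | h x y =>
      rw [mem_edgeSet] at hee
      refine hno ⟨fun _ => {x, y}, fun i => ⟨?_, ?_⟩, fun i j hij => absurd (Subsingleton.elim (α := Fin 1) i j) hij⟩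
      · rw [SimpleGraph.isNClique_iff]
        refine ⟨?_, Finset.card_pair hee.ne⟩
        intro a ha b hb hne2
        simp only [coe_insert, Set.mem_insert_iff, coe_singleton, Set.mem_singleton_iff] at ha hb
        rcases ha with rfl | rfl <;> rcases hb with rfl | rfl
        · exact absurd rfl hne2
        · exact hee
        · exact hee.symm
        · exact absurd rfl hne2
      · intro z hz
        simp only [mem_insert, mem_singleton] at hz
        rcases hz with rfl | rfl
        · exact hsub z (Sym2.mem_mk_left _ _)
        · exact hsub z (Sym2.mem_mk_right _ _)
  | succ t ih =>
    intro A hdeg hno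
    by_cases hE : edgesIn G A = ∅
    · rw [hE]; simp
    obtain ⟨e, he⟩ := Finset.nonempty_of_ne_empty hE
    simp only [edgesIn, mem_filter, mem_edgeFinset] at he
    obtain ⟨hee, hsub⟩ := he
    obtain ⟨⟨a, b⟩, rfl⟩ : ∃ p : V × V, s(p.1, p.2) = e := ⟨Quot.out e, by
      conv_rhs => rw [← Quot.out_eq e]⟩
    rw [mem_edgeSet] at hee
    have haA : a ∈ A := hsub a (Sym2.mem_mk_left _ _)
    have hbA : b ∈ A := hsub b (Sym2.mem_mk_right _ _)
    set A' : Finset V := A \ {a, b} with hA'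
    have hno' : ¬ MatchingIn G (t + 1) A' := by
      intro ⟨f, hf1, hf2⟩
      refine hno ⟨Fin.cons {a, b} f, fun i => ?_, fun i j hne => ?_⟩
      · induction i using Fin.cases with
        | zero =>
          simp only [Fin.cons_zero]
          constructor
          · rw [SimpleGraph.isNClique_iff]
            refine ⟨?_, Finset.card_pair hee.ne⟩
            intro x hx y hy hne2
            simp only [coe_insert, Set.mem_insert_iff, coe_singleton, Set.mem_singleton_iff] at hx hy
            rcases hx with rfl | rfl <;> rcases hy with rfl | rfl
            · exact absurd rfl hne2
            · exact hee
            · exact hee.symm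
            · exact absurd rfl hne2
          · intro z hz
            simp only [mem_insert, mem_singleton] at hz
            rcases hz with rfl | rfl <;> assumption
        | succ i =>
          simp only [Fin.cons_succ]
          exact ⟨(hf1 i).1, (hf1 i).2.trans (sdiff_subset)⟩
      · have hdisj_ab : ∀ i, Disjoint ({a, b} : Finset V) (f i) := by
          intro i
          rw [Finset.disjoint_left]
          intro x hx hx2
          have := (hf1 i).2 hx2
          simp only [hA', mem_sdiff] at this
          exact this.2 hx
        induction i using Fin.cases with
        | zero =>
          induction j using Fin.cases with
          | zero => exact absurd rfl hne
          | succ j' => simp only [Fin.cons_zero, Fin.cons_succ]; exact hdisj_ab j'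
        | succ i' =>
          induction j using Fin.cases with
          | zero => simp only [Fin.cons_zero, Fin.cons_succ]; exact (hdisj_ab i').symm
          | succ j' =>
            simp only [Fin.cons_succ]
            exact hf2 i' j' (fun h => hne (by rw [h]))
    have hsubset : edgesIn G A ⊆ edgesIn G A' ∪ G.incidenceFinset a ∪ G.incidenceFinset b := by
      intro e' he'
      simp only [edgesIn, mem_filter, mem_edgeFinset] at he'
      by_cases ha : a ∈ e'
      · exact Finset.mem_union_left _ (Finset.mem_union_right _
          (by rw [mem_incidenceFinset]; exact ⟨he'.1, ha⟩))
      by_cases hb : b ∈ e'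
      · exact Finset.mem_union_right _ (by rw [mem_incidenceFinset]; exact ⟨he'.1, hb⟩)
      · refine Finset.mem_union_left _ (Finset.mem_union_left _ ?_)
        simp only [edgesIn, mem_filter, mem_edgeFinset]
        refine ⟨he'.1, fun v hv => ?_⟩
        simp only [hA', mem_sdiff, mem_insert, mem_singleton]
        exact ⟨he'.2 v hv, by rintro (rfl | rfl) <;> [exact ha hv; exact hb hv]⟩
    have h1 : (edgesIn G A).card ≤ (edgesIn G A').card + D + D := by
      calc (edgesIn G A).card ≤ (edgesIn G A' ∪ G.incidenceFinset a ∪ G.incidenceFinset b).card :=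
            Finset.card_le_card hsubset
        _ ≤ (edgesIn G A' ∪ G.incidenceFinset a).card + (G.incidenceFinset b).card :=
            Finset.card_union_le _ _
        _ ≤ (edgesIn G A').card + (G.incidenceFinset a).card + (G.incidenceFinset b).card := by
            have := Finset.card_union_le (edgesIn G A') (G.incidenceFinset a)
            omega
        _ ≤ (edgesIn G A').card + D + D := by
            rw [card_incidenceFinset_eq_degree, card_incidenceFinset_eq_degree]
            have := hdeg a haA
            have := hdeg b hbA
            omega
    have h2 := ih A' (fun v hv => hdeg v (mem_sdiff.mp hv).1) hno'
    calc (edgesIn G A).card ≤ (edgesIn G A').card + D + D := h1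
      _ ≤ t * (2 * D) + D + D := by omega
      _ ≤ (t + 1) * (2 * D) := by ring_nf; omega

lemma two_mul_choose_two (k : ℕ) : 2 * Nat.choose k 2 = k * (k - 1) := by
  rw [Nat.choose_two_right]
  rcases k with _ | j
  · rfl
  · rw [Nat.mul_div_cancel' ]
    · rw [Nat.succ_sub_one]
      exact (even_iff_two_dvd.mp (by simpa [mul_comm] using Nat.even_mul_succ_self j))

lemma joinCard (k m : ℕ) :
    (GraphJoin (⊤ : SimpleGraph (Fin k)) (⊥ : SimpleGraph (Fin m))).edgeFinset.card
      = k * m + Nat.choose k 2 := by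
  set J := GraphJoin (⊤ : SimpleGraph (Fin k)) (⊥ : SimpleGraph (Fin m)) with hJ
  have hnl : ∀ a : Fin k, J.neighborFinset (Sum.inl a)
      = ({a}ᶜ : Finset (Fin k)).image Sum.inl ∪ (univ : Finset (Fin m)).image Sum.inr := by
    intro a
    ext y
    rcases y with b | b <;>
      simp [hJ, GraphJoin, mem_neighborFinset, eq_comm, Ne, Sum.inl.injEq]
  have hnr : ∀ b : Fin m, J.neighborFinset (Sum.inr b)
      = (univ : Finset (Fin k)).image Sum.inl := by
    intro b
    ext y
    rcases y with a | a <;>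
      simp [hJ, GraphJoin, mem_neighborFinset]
  have hdl : ∀ a : Fin k, J.degree (Sum.inl a) = (k - 1) + m := by
    intro a
    rw [← card_neighborFinset_eq_degree, hnl a, card_union_of_disjoint, card_image_of_injective _ Sum.inl_injective, card_image_of_injective _ Sum.inr_injective]
    · simp [Finset.card_compl]
    · rw [Finset.disjoint_left]
      rintro x hx hx2
      simp only [mem_image] at hx hx2
      obtain ⟨u, _, rfl⟩ := hx
      obtain ⟨w, _, h⟩ := hx2
      exact Sum.inr_ne_inl h
  have hdr : ∀ b : Fin m, J.degree (Sum.inr b) = k := by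
    intro b
    rw [← card_neighborFinset_eq_degree, hnr b, card_image_of_injective _ Sum.inl_injective]
    simp
  have hsum := J.sum_degrees_eq_twice_card_edges
  rw [Fintype.sum_sum_type] at hsum
  simp only [hdl, hdr, Finset.sum_const, Finset.card_univ, Fintype.card_fin, smul_eq_mul] at hsum
  have h2 : 2 * (k * m + Nat.choose k 2) = k * ((k - 1) + m) + m * k := by
    have := two_mul_choose_two k
    ring_nf
    ring_nf at this
    nlinarith [this]
  omega

def coverGraph {V : Type*} [DecidableEq V] (S : Finset V) : SimpleGraph V where
  Adj x y := x ≠ y ∧ (x ∈ S ∨ y ∈ S)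
  symm := ⟨fun x y h => ⟨h.1.symm, h.2.symm⟩⟩
  loopless := ⟨fun x h => h.1 rfl⟩

lemma coverIso {V : Type*} [Fintype V] [DecidableEq V] (S : Finset V) (k m : ℕ)
    (hk : S.card = k) (hm : Sᶜ.card = m) :
    Nonempty (coverGraph S ≃g GraphJoin (⊤ : SimpleGraph (Fin k)) (⊥ : SimpleGraph (Fin m))) := by
  have e1 : {x // x ∈ S} ≃ Fin k := S.equivFinOfCardEq hk
  have e2 : {x // ¬ x ∈ S} ≃ Fin m :=
    (Equiv.subtypeEquivRight (fun x => (Finset.mem_compl (s := S)).symm)).trans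
      (Sᶜ.equivFinOfCardEq hm)
  let e : V ≃ Fin k ⊕ Fin m := (Equiv.sumCompl (· ∈ S)).symm.trans (Equiv.sumCongr e1 e2)
  have hepos : ∀ x (h : x ∈ S), e x = Sum.inl (e1 ⟨x, h⟩) := by
    intro x h
    simp only [e, Equiv.trans_apply, Equiv.sumCompl_symm_apply_of_pos h, Equiv.sumCongr_apply,
      Sum.map_inl]
  have heneg : ∀ x (h : x ∉ S), e x = Sum.inr (e2 ⟨x, h⟩) := by
    intro x h
    simp only [e, Equiv.trans_apply, Equiv.sumCompl_symm_apply_of_neg h, Equiv.sumCongr_apply,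
      Sum.map_inr]
  refine ⟨⟨e, ?_⟩⟩
  intro x y
  by_cases hx : x ∈ S <;> by_cases hy : y ∈ S
  · rw [hepos x hx, hepos y hy]
    show (e1 ⟨x, hx⟩ ≠ e1 ⟨y, hy⟩) ↔ _
    constructor
    · intro h
      exact ⟨fun hxy => h (by subst hxy; rfl), Or.inl hx⟩
    · intro h hne
      exact h.1 (congrArg Subtype.val (e1.injective hne))
  · rw [hepos x hx, heneg y hy]
    show True ↔ _
    simp only [true_iff]
    exact ⟨fun hxy => hy (hxy ▸ hx), Or.inl hx⟩
  · rw [heneg x hx, hepos y hy]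
    show True ↔ _
    simp only [true_iff]
    exact ⟨fun hxy => hx (hxy ▸ hy), Or.inr hy⟩
  · rw [heneg x hx, heneg y hy]
    show False ↔ _
    simp only [false_iff]
    rintro ⟨-, h | h⟩
    exacts [hx h, hy h]


/-- Erdős–Gallai: for `n` large, a graph on `n` vertices with no matching of size `k+1`
has at most `k(n-k) + C(k,2)` edges, with equality iff `G = K_k + \overline{K_{n-k}}`. -/
theorem stmt17 (k : ℕ) : ∃ N : ℕ, ∀ n : ℕ, N ≤ n →
    ∀ G : SimpleGraph (Fin n), ¬ HasDisjointCliques G (k + 1) 2 →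
      G.edgeFinset.card ≤ k * (n - k) + Nat.choose k 2 ∧
      (G.edgeFinset.card = k * (n - k) + Nat.choose k 2 ↔
        Nonempty (G ≃g GraphJoin (⊤ : SimpleGraph (Fin k)) (⊥ : SimpleGraph (Fin (n - k))))) := by
  classical
  refine ⟨5*k*k + 3*k + 4, ?_⟩
  intro n hn G hG
  have hkn : k ≤ n := by nlinarith
  have hback : Nonempty (G ≃g GraphJoin (⊤ : SimpleGraph (Fin k)) (⊥ : SimpleGraph (Fin (n-k)))) →
      G.edgeFinset.card = k * (n - k) + Nat.choose k 2 := by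
    rintro ⟨iso⟩
    rw [iso.card_edgeFinset_eq, joinCard]
  set S : Finset (Fin n) := Finset.univ.filter (fun v => 2*k+2 ≤ G.degree v) with hS
  have hdegS : ∀ v ∈ S, 2*k+2 ≤ G.degree v := fun v hv => (mem_filter.mp hv).2
  have hdegC : ∀ v ∈ Sᶜ, G.degree v ≤ 2*k+1 := by
    intro v hv
    have h := mem_compl.mp hv
    simp only [hS, mem_filter, mem_univ, true_and, not_le] at h
    omega
  have hcastG : ∀ (a : ℕ) (h : a = k+1) (f : Fin a → Finset (Fin n)),
      (∀ i, G.IsNClique 2 (f i)) → (∀ i j, i ≠ j → Disjoint (f i) (f j)) → False := by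
    intro a h f h1 h2
    exact hG ⟨fun i => f (Fin.cast h.symm i), fun i => h1 _,
      fun i j hne => h2 _ _ ((Fin.cast_injective _).ne hne)⟩
  have hSk : S.card ≤ k := by
    by_contra hc
    push_neg at hc
    obtain ⟨T, hTS, hTcard⟩ := Finset.exists_subset_card_eq hc
    obtain ⟨f, hf1, hf2⟩ := greedy G T ∅ (Finset.disjoint_empty_right _)
      (fun v hv => by
        have := hdegS v (hTS hv)
        rw [hTcard, card_empty]
        omega)
    exact hcastG T.card hTcard f (fun i => (hf1 i).1) hf2
  have hnoM : ∀ m, S.card + m = k + 1 → ¬ MatchingIn G m Sᶜ := by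
    intro m hm hMat
    obtain ⟨f, h1, h2⟩ := combine G S m hMat (fun v hv => by have := hdegS v hv; omega) (greedy G)
    exact hcastG _ hm f h1 h2
  have hsplit : G.edgeFinset.card =
      (G.edgeFinset.filter (fun e => ∃ v ∈ e, v ∈ S)).card + (edgesIn G Sᶜ).card := by
    have h0 := card_filter_add_card_filter_not (s := G.edgeFinset)
      (p := fun e => ∃ v ∈ e, v ∈ S)
    have hEq : G.edgeFinset.filter (fun e => ¬ ∃ v ∈ e, v ∈ S) = edgesIn G Sᶜ := by
      ext e
      simp only [edgesIn, mem_filter, mem_compl, not_exists, not_and]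
    rw [hEq] at h0
    omega
  have hmeet : (G.edgeFinset.filter (fun e => ∃ v ∈ e, v ∈ S)).card ≤ S.card * (n-1) := by
    have hsub : G.edgeFinset.filter (fun e => ∃ v ∈ e, v ∈ S)
        ⊆ S.biUnion (fun v => G.incidenceFinset v) := by
      intro e he
      obtain ⟨heE, v, hve, hvS⟩ := mem_filter.mp he
      refine mem_biUnion.mpr ⟨v, hvS, ?_⟩
      rw [mem_incidenceFinset]
      exact ⟨mem_edgeFinset.mp heE, hve⟩
    calc (G.edgeFinset.filter (fun e => ∃ v ∈ e, v ∈ S)).card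
        ≤ (S.biUnion (fun v => G.incidenceFinset v)).card := card_le_card hsub
      _ ≤ ∑ v ∈ S, (G.incidenceFinset v).card := card_biUnion_le
      _ ≤ ∑ v ∈ S, (n-1) := by
          refine sum_le_sum fun v _ => ?_
          rw [card_incidenceFinset_eq_degree]
          have := G.degree_lt_card_verts v
          rw [Fintype.card_fin] at this
          omega
      _ = S.card * (n-1) := by rw [sum_const, smul_eq_mul]
  by_cases hcase : S.card = k
  · have hle : G ≤ coverGraph S := by
      intro x y hxy
      refine ⟨hxy.ne, ?_⟩
      by_contra hc
      push_neg at hc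
      apply hnoM 1 (by omega)
      refine ⟨fun _ => {x, y}, fun i => ⟨pairClique hxy, ?_⟩,
        fun i j hne => absurd (Subsingleton.elim (α := Fin 1) i j) hne⟩
      intro z hz
      simp only [mem_insert, mem_singleton] at hz
      rcases hz with rfl | rfl <;> [exact mem_compl.mpr hc.1; exact mem_compl.mpr hc.2]
    obtain ⟨iso⟩ := coverIso S k (n-k) hcase (by rw [card_compl, Fintype.card_fin, hcase])
    have hcov : (coverGraph S).edgeFinset.card = k * (n-k) + Nat.choose k 2 := by
      rw [iso.card_edgeFinset_eq, joinCard]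
    have hsubE := edgeFinset_mono hle
    have hbd : G.edgeFinset.card ≤ k*(n-k) + Nat.choose k 2 :=
      le_trans (card_le_card hsubE) (le_of_eq hcov)
    refine ⟨hbd, ⟨?_, hback⟩⟩
    intro heq
    have hEq : G.edgeFinset = (coverGraph S).edgeFinset :=
      Finset.eq_of_subset_of_card_le hsubE (by omega)
    have hGe : G = coverGraph S := edgeFinset_inj.mp hEq
    rw [hGe]
    exact ⟨iso⟩
  · have hslt : S.card < k := lt_of_le_of_ne hSk hcase
    have hC := edgesIn_card G (2*k+1) (k - S.card) Sᶜ hdegC (hnoM (k - S.card + 1) (by omega))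
    have hstrict : G.edgeFinset.card < k * (n-k) + Nat.choose k 2 := by
      have harith : S.card * (n-1) + (k - S.card) * (2*(2*k+1)) < k * (n-k) := by
        have hs1 : S.card ≤ k - 1 := by omega
        have hk1 : 1 ≤ k := by omega
        zify [hkn, (show 1 ≤ n by omega), (show S.card ≤ k by omega), hs1]
        nlinarith [(show (0:ℤ) ≤ ((k:ℤ) - 1 - S.card) * ((n:ℤ) - 3 - 4*k) by
          have h1 : (S.card : ℤ) ≤ (k:ℤ) - 1 := by exact_mod_cast by omega
          have h2 : (3:ℤ) + 4*k ≤ n := by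
            have : 3 + 4*k ≤ n := by nlinarith
            exact_mod_cast this
          nlinarith)]
      have hchoose : (0:ℕ) ≤ Nat.choose k 2 := Nat.zero_le _
      omega
    refine ⟨le_of_lt hstrict, ⟨fun h => absurd h (by omega), fun h => absurd (hback h) (by omega)⟩⟩
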